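/- Let A ∈ ℤ^{m×n} with 1 ≤ m < n satisfy the regularity assumptions and write A = (A_1, A_2) with A_1 ∈ ℤ^{m×m} and det A_1 ≠ 0. Let v̄ = A_1·1̄ be the sum of the first m columns of A, let 1̂ ∈ ℤ^n be the vector whose first m coordinates are 1 and whose last n−m coordinates are 0, and let L_A^⊥ = {z ∈ ℤ^n : A z = 0}. Then for every integer s ≥ 1, g_s(A) ≥ (1/(n−m+1)) · (m(A)/M(A)) · ( μ_s(P(A, v̄) − 1̂, L_A^⊥) − 2 − c(A_1, A) ), where m(A) and M(A) are the minimal and maximal absolute values of the m×m minors of A. -/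

import Mathlib

/-!
Write `A = (A₁, A₂)` and `E = A₁⁻¹ A₂`; by Cramer's rule every entry of `E` is a quotient of two
`m × m` minors, so `|E i j| ≤ M(A) / m(A)`.

Let `t` be such that every integer `b` in the interior of `t v + C` lies in `F_s(A)`, and let `x`
be a real point of `ker A`, so `x₁ = -E x₂`. Round `x` to the integer point `u` with
`u₂ = ⌊x₂⌋` and `u₁ = ⌊σ⌋ + 1`, where `σ = A₁⁻¹ (t v - A₂ u₂)`. Then `A u = t v + A₁ (u₁ - σ)`
with `u₁ - σ ∈ (0, 1]ᵐ`, so `A u` is an interior point of `t v + C` and has `s` nonnegative integer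
preimages `z`. Every `u - z` lies in `L_A^⊥`, and since `u - x ≤ μ 1̂` coordinatewise for
`μ = (k + 1) (M(A) / m(A)) t + 2 + c`, the point `1̂ + (x - (u - z)) / μ` lies in `P(A, v̄)`.
Hence `μ_s ≤ μ`, which rearranges to the claimed bound on `t`, and so on `g_s(A)`.

The infimum defining `g_s(A)` is over a nonempty set as soon as some `μ > 0` is an `s`-covering
radius: `P(A, v̄)` is bounded (by pointedness) and `A ℤⁿ = ℤᵐ` (by the gcd condition), so with `R`
bounding the coordinates of `P(A, v̄)`, every integer point in the interior of `μ R v + C` has `s`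
nonnegative preimages. If no covering radius exists, `μ_s` is `sInf ∅ = 0` and the bound is
trivial.
-/

open scoped BigOperators
open Matrix

noncomputable section

/-- The real matrix obtained from an integer matrix. -/
def Rmat {m n : ℕ} (A : Matrix (Fin m) (Fin n) ℤ) : Matrix (Fin m) (Fin n) ℝ :=
  A.map (Int.cast : ℤ → ℝ)

/-- The real vector obtained from an integer vector. -/
def Rvec {m : ℕ} (b : Fin m → ℤ) : Fin m → ℝ := fun i => (b i : ℝ)

/-- The knapsack polytope P(A,b) = {x ≥ 0 : A x = b}. -/
def knap {m n : ℕ} (A : Matrix (Fin m) (Fin n) ℤ) (b : Fin m → ℝ) : Set (Fin n → ℝ) :=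
  {x | (∀ i, 0 ≤ x i) ∧ (Rmat A).mulVec x = b}

/-- The set F_s(A) of integer vectors b for which P(A,b) contains at least s integer points. -/
def feas {m n : ℕ} (s : ℕ) (A : Matrix (Fin m) (Fin n) ℤ) : Set (Fin m → ℤ) :=
  {b | s ≤ Set.ncard {x : Fin n → ℤ | (∀ i, 0 ≤ x i) ∧ A.mulVec x = b}}

/-- The cone generated by the columns of A. -/
def coneOf {m n : ℕ} (A : Matrix (Fin m) (Fin n) ℤ) : Set (Fin m → ℝ) :=
  {y | ∃ x : Fin n → ℝ, (∀ i, 0 ≤ x i) ∧ (Rmat A).mulVec x = y}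

/-- The generalized diagonal s-Frobenius number g_s(A, w). -/
def gDiag {m n : ℕ} (s : ℕ) (A : Matrix (Fin m) (Fin n) ℤ) (w : Fin m → ℝ) : ℝ :=
  sInf {t : ℝ | 0 ≤ t ∧
    ∀ b : Fin m → ℤ, Rvec b ∈ interior ((fun c => t • w + c) '' coneOf A) → b ∈ feas s A}

/-- v = A·1 is the sum of the columns of A (as a real vector). -/
def vA {m n : ℕ} (A : Matrix (Fin m) (Fin n) ℤ) : Fin m → ℝ :=
  (Rmat A).mulVec (fun _ => 1)

/-- The diagonal s-Frobenius number g_s(A) = g_s(A, A·1). -/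
def gFrob {m n : ℕ} (s : ℕ) (A : Matrix (Fin m) (Fin n) ℤ) : ℝ := gDiag s A (vA A)

/-- The regularity assumptions: the m×m minors of A have gcd 1, and the only
nonnegative real solution of A x = 0 is x = 0. -/
def regular {m n : ℕ} (A : Matrix (Fin m) (Fin n) ℤ) : Prop :=
  Finset.univ.gcd (fun I : Fin m ↪ Fin n => (A.submatrix id ⇑I).det) = 1 ∧
  ∀ x : Fin n → ℝ, (∀ i, 0 ≤ x i) → (Rmat A).mulVec x = 0 → x = 0

/-- The s-covering radius of K with respect to L: the smallest μ > 0 such that every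
point of the real span of L lies in y + μK for at least s distinct y ∈ L. -/
def muCov {N : ℕ} (s : ℕ) (K L : Set (Fin N → ℝ)) : ℝ :=
  sInf {μ : ℝ | 0 < μ ∧ ∀ x ∈ Submodule.span ℝ L,
    ∃ T : Finset (Fin N → ℝ), ↑T ⊆ L ∧ s ≤ T.card ∧ ∀ y ∈ T, ∃ k ∈ K, x = y + μ • k}

/-- The set of absolute values of m×m minors of A. -/
def minorAbs {m n : ℕ} (A : Matrix (Fin m) (Fin n) ℤ) : Set ℤ :=
  {d | ∃ I : Fin m ↪ Fin n, d = |(A.submatrix id ⇑I).det|}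

/-- m(A): the minimal absolute m×m minor of A. -/
def mMin {m n : ℕ} (A : Matrix (Fin m) (Fin n) ℤ) : ℤ := sInf (minorAbs A)

/-- M(A): the maximal absolute m×m minor of A. -/
def mMax {m n : ℕ} (A : Matrix (Fin m) (Fin n) ℤ) : ℤ := sSup (minorAbs A)

/-- The lattice L_A^⊥ = {z ∈ ℤ^n : A z = 0}, viewed as a subset of ℝ^n. -/
def kerLat {m n : ℕ} (A : Matrix (Fin m) (Fin n) ℤ) : Set (Fin n → ℝ) :=
  {x | ∃ z : Fin n → ℤ, A.mulVec z = 0 ∧ x = Rvec z}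

/-- √(det (A Aᵀ)). -/
def sqrtDet {m n : ℕ} (A : Matrix (Fin m) (Fin n) ℤ) : ℝ :=
  Real.sqrt (((A * Aᵀ).det : ℤ) : ℝ)

/-- The s-Frobenius number of a positive primitive integer vector. -/
def sFrob {n : ℕ} (s : ℕ) (a : Fin n → ℤ) : ℤ :=
  sSup {b : ℤ | Set.ncard {x : Fin n → ℤ | (∀ i, 0 ≤ x i) ∧ ∑ i, a i * x i = b} < s}

/-- The full-rank lattice in ℝ^d with basis the columns of an invertible matrix B. -/
def latSet {d : ℕ} (B : Matrix (Fin d) (Fin d) ℝ) : Set (Fin d → ℝ) :=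
  {x | ∃ z : Fin d → ℤ, x = B.mulVec (fun i => (z i : ℝ))}

/-- The absolute s-inhomogeneous minimum ϑ_s(K) = inf_L μ_s(K,L)/det(L)^{1/d}. -/
def theta (s d : ℕ) (K : Set (Fin d → ℝ)) : ℝ :=
  sInf {r : ℝ | ∃ B : Matrix (Fin d) (Fin d) ℝ, B.det ≠ 0 ∧
    r = muCov s K (latSet B) / |B.det| ^ ((1 : ℝ) / d)}

/-- The standard simplex S_d ⊂ ℝ^d. -/
def stdSimplex' (d : ℕ) : Set (Fin d → ℝ) :=
  {x | (∀ i, 0 ≤ x i) ∧ ∑ i, x i ≤ 1}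

section Casts

variable {m n : ℕ}

theorem Rmat_mulVec_Rvec (A : Matrix (Fin m) (Fin n) ℤ) (z : Fin n → ℤ) :
    Rmat A *ᵥ Rvec z = Rvec (A *ᵥ z) := by
  ext i
  simp [Rmat, Rvec, mulVec, dotProduct]

theorem det_Rmat (B : Matrix (Fin n) (Fin n) ℤ) : (Rmat B).det = B.det :=
  ((Int.castRingHom ℝ).map_det B).symm

@[simp]
theorem Rvec_zero : Rvec (0 : Fin m → ℤ) = 0 := by
  ext
  simp [Rvec]

theorem Rvec_injective : Function.Injective (Rvec (m := m)) :=
  fun _ _ h => funext fun i => Int.cast_injective (congrFun h i)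

theorem Rvec_append (u : Fin m → ℤ) (v : Fin n → ℤ) :
    Rvec (Fin.append u v) = Fin.append (Rvec u) (Rvec v) := by
  ext l
  refine Fin.addCases (fun i => ?_) (fun j => ?_) l <;> simp [Rvec]

theorem isUnit_det_submatrix_Rmat (A : Matrix (Fin m) (Fin n) ℤ) (f : Fin m → Fin n)
    (h : (A.submatrix id f).det ≠ 0) : IsUnit ((Rmat A).submatrix id f).det := by
  rw [isUnit_iff_ne_zero]
  exact (det_Rmat (A.submatrix id f)).trans_ne (Int.cast_ne_zero.2 h)

theorem Rmat_mulVec_eq_zero_of_mem_span_kerLat (A : Matrix (Fin m) (Fin n) ℤ) {x : Fin n → ℝ}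
    (hx : x ∈ Submodule.span ℝ (kerLat A)) : Rmat A *ᵥ x = 0 := by
  have hle : Submodule.span ℝ (kerLat A) ≤ LinearMap.ker (Rmat A).mulVecLin := by
    rw [Submodule.span_le]
    rintro _ ⟨z, hz, rfl⟩
    simp [Rmat_mulVec_Rvec, hz]
  exact hle hx

end Casts

section Block

variable {α : Type*} {p m k : ℕ}

theorem mulVec_append [NonUnitalNonAssocSemiring α] (B : Matrix (Fin p) (Fin (m + k)) α)
    (x : Fin m → α) (y : Fin k → α) :
    B *ᵥ Fin.append x y =
      B.submatrix id (Fin.castAdd k) *ᵥ x + B.submatrix id (Fin.natAdd m) *ᵥ y := by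
  ext i
  simp [mulVec, dotProduct, Fin.sum_univ_add]

def blockInvMul [CommRing α] (B : Matrix (Fin m) (Fin (m + k)) α) : Matrix (Fin m) (Fin k) α :=
  (B.submatrix id (Fin.castAdd k))⁻¹ * B.submatrix id (Fin.natAdd m)

variable [CommRing α] (B : Matrix (Fin m) (Fin (m + k)) α)

theorem inv_mulVec_mulVec_append (hB : IsUnit (B.submatrix id (Fin.castAdd k)).det)
    (x : Fin m → α) (y : Fin k → α) :
    (B.submatrix id (Fin.castAdd k))⁻¹ *ᵥ (B *ᵥ Fin.append x y) = x + blockInvMul B *ᵥ y := by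
  rw [mulVec_append, mulVec_add, mulVec_mulVec, nonsing_inv_mul _ hB, one_mulVec, blockInvMul,
    mulVec_mulVec]

theorem inv_mulVec_smul_mulVec_one_sub (hB : IsUnit (B.submatrix id (Fin.castAdd k)).det)
    (t : α) (y : Fin k → α) :
    (B.submatrix id (Fin.castAdd k))⁻¹ *ᵥ
        (t • (B *ᵥ fun _ => 1) - B.submatrix id (Fin.natAdd m) *ᵥ y) =
      t • 1 + blockInvMul B *ᵥ (t • 1 - y) := by
  have h1 : (fun _ => 1 : Fin (m + k) → α) = Fin.append 1 1 := by
    ext l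
    refine Fin.addCases (fun i => ?_) (fun j => ?_) l <;> simp
  rw [← inv_mulVec_mulVec_append B hB]
  congr 1
  rw [h1, mulVec_append, mulVec_append, mulVec_sub, mulVec_smul, mulVec_smul, smul_add]
  abel

theorem left_eq_neg_blockInvMul_mulVec (hB : IsUnit (B.submatrix id (Fin.castAdd k)).det)
    {x : Fin (m + k) → α} (hx : B *ᵥ x = 0) :
    (fun i => x (Fin.castAdd k i)) = -(blockInvMul B *ᵥ fun j => x (Fin.natAdd m j)) := by
  have h := inv_mulVec_mulVec_append B hB (fun i => x (Fin.castAdd k i))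
    (fun j => x (Fin.natAdd m j))
  rw [Fin.append_castAdd_natAdd, hx, mulVec_zero] at h
  exact eq_neg_of_add_eq_zero_left h.symm

theorem eq_of_mulVec_eq_zero_of_forall_natAdd_eq
    (hB : IsUnit (B.submatrix id (Fin.castAdd k)).det) {x y : Fin (m + k) → α}
    (hx : B *ᵥ x = 0) (hy : B *ᵥ y = 0) (hxy : ∀ j, x (Fin.natAdd m j) = y (Fin.natAdd m j)) :
    x = y := by
  rw [← Fin.append_castAdd_natAdd (f := x), ← Fin.append_castAdd_natAdd (f := y),
    left_eq_neg_blockInvMul_mulVec B hB hx, left_eq_neg_blockInvMul_mulVec B hB hy, funext hxy]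

end Block

theorem mulVec_apply_le_sum_max {ι κ : Type*} [Fintype κ] (M : Matrix ι κ ℝ) {d : κ → ℝ}
    (hd0 : ∀ j, 0 ≤ d j) (hd1 : ∀ j, d j ≤ 1) (i : ι) : (M *ᵥ d) i ≤ ∑ j, max (M i j) 0 :=
  Finset.sum_le_sum fun j _ => (mul_le_mul_of_nonneg_right (le_max_left _ _) (hd0 j)).trans
    (mul_le_of_le_one_right (le_max_right _ _) (hd1 j))

def maxPosRowSum {m k : ℕ} (E : Matrix (Fin m) (Fin k) ℝ) : ℝ :=
  sSup {x : ℝ | ∃ i : Fin m, x = ∑ j : Fin k, max (E i j) 0}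

theorem sum_max_le_maxPosRowSum {m k : ℕ} (E : Matrix (Fin m) (Fin k) ℝ) (i : Fin m) :
    ∑ j, max (E i j) 0 ≤ maxPosRowSum E := by
  have hfin : {x : ℝ | ∃ i, x = ∑ j, max (E i j) 0}.Finite :=
    (Set.finite_range fun i => ∑ j, max (E i j) 0).subset fun _ ⟨i, hi⟩ => ⟨i, hi.symm⟩
  exact le_csSup hfin.bddAbove ⟨i, rfl⟩

theorem maxPosRowSum_nonneg {m k : ℕ} (E : Matrix (Fin m) (Fin k) ℝ) : 0 ≤ maxPosRowSum E :=
  Real.sSup_nonneg fun _ ⟨_, hi⟩ => hi ▸ Finset.sum_nonneg fun _ _ => le_max_right _ _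

section Minors

variable {m n : ℕ} (A : Matrix (Fin m) (Fin n) ℤ)

theorem abs_det_submatrix_le_mMax (I : Fin m ↪ Fin n) : |(A.submatrix id I).det| ≤ mMax A :=
  le_csSup ((Set.finite_range fun I : Fin m ↪ Fin n => |(A.submatrix id I).det|).bddAbove.mono
    fun _ ⟨J, hJ⟩ => (⟨J, hJ.symm⟩ : _ ∈ Set.range _)) ⟨I, rfl⟩

theorem mMin_le_abs_det_submatrix (I : Fin m ↪ Fin n) : mMin A ≤ |(A.submatrix id I).det| :=
  csInf_le ⟨0, fun _ ⟨_, hJ⟩ => hJ ▸ abs_nonneg _⟩ ⟨I, rfl⟩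

theorem mMin_nonneg (I : Fin m ↪ Fin n) : 0 ≤ mMin A :=
  le_csInf (⟨_, I, rfl⟩ : (minorAbs A).Nonempty) fun _ ⟨_, hJ⟩ => hJ ▸ abs_nonneg _

theorem one_le_mMax_div_mMin (I : Fin m ↪ Fin n) (hmin : 0 < mMin A) :
    1 ≤ (mMax A : ℝ) / mMin A := by
  rw [one_le_div (Int.cast_pos.2 hmin)]
  exact_mod_cast (mMin_le_abs_det_submatrix A I).trans (abs_det_submatrix_le_mMax A I)

end Minors

section Cramer

variable {m k : ℕ} (A : Matrix (Fin m) (Fin (m + k)) ℤ)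

theorem updateCol_submatrix_castAdd (i : Fin m) (j : Fin k) :
    (A.submatrix id (Fin.castAdd k)).updateCol i (fun r => A r (Fin.natAdd m j)) =
      A.submatrix id ((Fin.castAddEmb k).setValue i (Fin.natAdd m j)) := by
  ext r c
  have hne : Fin.castAddEmb k c ≠ Fin.natAdd m j := fun h => by
    have := congrArg Fin.val h
    simp [Fin.castAddEmb_apply] at this
    omega
  by_cases hc : c = i
  · subst hc
    simp
  · simp [hc, Function.Embedding.setValue_eq_of_ne hc hne, Fin.castAddEmb_apply]

theorem abs_det_mul_abs_blockInvMul_le (hdet : (A.submatrix id (Fin.castAdd k)).det ≠ 0)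
    (i : Fin m) (j : Fin k) :
    |((A.submatrix id (Fin.castAdd k)).det : ℝ)| * |blockInvMul (Rmat A) i j| ≤ mMax A := by
  set B := Rmat A
  have hdetB : (B.submatrix id (Fin.castAdd k)).det = (A.submatrix id (Fin.castAdd k)).det :=
    det_Rmat _
  have hB := isUnit_det_submatrix_Rmat A _ hdet
  have hcramer := congrFun (det_smul_inv_mulVec_eq_cramer _ (fun r => B r (Fin.natAdd m j)) hB) i
  have hupd : (B.submatrix id (Fin.castAdd k)).updateCol i (fun r => B r (Fin.natAdd m j)) =
      Rmat (A.submatrix id ((Fin.castAddEmb k).setValue i (Fin.natAdd m j))) := by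
    rw [← updateCol_submatrix_castAdd]
    ext r c
    by_cases hc : c = i <;> simp [B, Rmat, hc]
  have hentry : blockInvMul B i j = ((B.submatrix id (Fin.castAdd k))⁻¹ *ᵥ
      fun r => B r (Fin.natAdd m j)) i := by
    simp [blockInvMul, mul_apply, mulVec, dotProduct]
  rw [cramer_apply, hupd, det_Rmat, Pi.smul_apply, smul_eq_mul, hdetB] at hcramer
  rw [hentry, ← abs_mul, hcramer]
  exact_mod_cast abs_det_submatrix_le_mMax A _

theorem abs_blockInvMul_le (hdet : (A.submatrix id (Fin.castAdd k)).det ≠ 0)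
    (hmin : 0 < mMin A) (i : Fin m) (j : Fin k) :
    |blockInvMul (Rmat A) i j| ≤ (mMax A : ℝ) / mMin A := by
  have hdet_ge : (mMin A : ℝ) ≤ |((A.submatrix id (Fin.castAdd k)).det : ℝ)| := by
    exact_mod_cast mMin_le_abs_det_submatrix A (Fin.castAddEmb k)
  rw [le_div_iff₀ (Int.cast_pos.2 hmin), mul_comm]
  exact (mul_le_mul_of_nonneg_right hdet_ge (abs_nonneg _)).trans
    (abs_det_mul_abs_blockInvMul_le A hdet i j)

end Cramer

section Pointed

variable {m n : ℕ}

theorem exists_sum_le_mul_norm_mulVec {ι : Type*} [Fintype ι] (B : Matrix (Fin m) ι ℝ)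
    (hB : ∀ x : ι → ℝ, (∀ i, 0 ≤ x i) → B *ᵥ x = 0 → x = 0) :
    ∃ C, 0 ≤ C ∧ ∀ x : ι → ℝ, (∀ i, 0 ≤ x i) → ∑ i, x i ≤ C * ‖B *ᵥ x‖ := by
  have hcont : Continuous fun x : ι → ℝ => ‖B *ᵥ x‖ :=
    (continuous_const.matrix_mulVec continuous_id).norm
  obtain ⟨δ, hδ, hδle⟩ := (isCompact_stdSimplex ℝ ι).exists_forall_le' hcont.continuousOn
    (a := 0) fun x ⟨hx0, hx1⟩ => norm_pos_iff.2 fun h => by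
      simp [hB x hx0 h] at hx1
  refine ⟨δ⁻¹, inv_nonneg.2 hδ.le, fun x hx => ?_⟩
  rcases (Finset.sum_nonneg fun i _ => hx i).eq_or_lt with hσ | hσ
  · rw [← hσ]
    positivity
  have hmem : (∑ i, x i)⁻¹ • x ∈ stdSimplex ℝ ι :=
    ⟨fun i => mul_nonneg (inv_nonneg.2 hσ.le) (hx i), by
      simp [← Finset.mul_sum, inv_mul_cancel₀ hσ.ne']⟩
  have := hδle _ hmem
  rw [mulVec_smul, norm_smul, norm_inv, Real.norm_of_nonneg hσ.le] at this
  rw [inv_mul_eq_div, le_div_iff₀ hδ]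
  rw [le_inv_mul_iff₀ hσ] at this
  linarith

variable (A : Matrix (Fin m) (Fin n) ℤ)

theorem exists_forall_mem_knap_le
    (hA : ∀ x : Fin n → ℝ, (∀ i, 0 ≤ x i) → Rmat A *ᵥ x = 0 → x = 0) (b : Fin m → ℝ) :
    ∃ R, 0 ≤ R ∧ ∀ x ∈ knap A b, ∀ l, x l ≤ R := by
  obtain ⟨C, hC, hCle⟩ := exists_sum_le_mul_norm_mulVec (Rmat A) hA
  refine ⟨C * ‖b‖, by positivity, fun x ⟨hx0, hxb⟩ l => ?_⟩
  calc x l ≤ ∑ i, x i := Finset.single_le_sum (fun i _ => hx0 i) (Finset.mem_univ l)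
    _ ≤ C * ‖b‖ := hxb ▸ hCle x hx0

theorem finite_fiber (hA : ∀ x : Fin n → ℝ, (∀ i, 0 ≤ x i) → Rmat A *ᵥ x = 0 → x = 0)
    (b : Fin m → ℤ) :
    {z : Fin n → ℤ | (∀ i, 0 ≤ z i) ∧ A *ᵥ z = b}.Finite := by
  obtain ⟨R, -, hR⟩ := exists_forall_mem_knap_le A hA (Rvec b)
  refine (Set.finite_Icc (0 : Fin n → ℤ) fun _ => ⌈R⌉).subset fun z ⟨hz0, hzb⟩ => ⟨hz0, fun l => ?_⟩
  have hmem : Rvec z ∈ knap A (Rvec b) :=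
    ⟨fun i => Int.cast_nonneg (hz0 i), by rw [Rmat_mulVec_Rvec, hzb]⟩
  exact Int.cast_le.1 ((hR _ hmem l).trans (Int.le_ceil R))

end Pointed

section Surjective

variable {m n : ℕ} (A : Matrix (Fin m) (Fin n) ℤ)

theorem exists_mulVec_eq_submatrix_mulVec (I : Fin m ↪ Fin n) (y : Fin m → ℤ) :
    ∃ z : Fin n → ℤ, A *ᵥ z = A.submatrix id I *ᵥ y := by
  classical
  refine ⟨Function.extend I y 0, funext fun r => ?_⟩
  simp only [mulVec, dotProduct, submatrix_apply, id]
  rw [← Finset.sum_subset (Finset.subset_univ (Finset.univ.map I)), Finset.sum_map]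
  · simp [I.injective.extend_apply]
  · intro l _ hl
    rw [Function.extend_apply' _ _ _ fun ⟨i, h⟩ => hl (by simp [← h]), Pi.zero_apply, mul_zero]

theorem exists_mulVec_eq_of_gcd_eq_one
    (hA : Finset.univ.gcd (fun I : Fin m ↪ Fin n => (A.submatrix id I).det) = 1)
    (b : Fin m → ℤ) : ∃ z : Fin n → ℤ, A *ᵥ z = b := by
  suffices h : LinearMap.range A.mulVecLin = ⊤ from LinearMap.range_eq_top.1 h b
  obtain ⟨g, hg⟩ :=
    Finset.gcd_eq_sum_mul Finset.univ fun I : Fin m ↪ Fin n => (A.submatrix id I).det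
  rw [hA] at hg
  rw [eq_top_iff, ← (Pi.basisFun ℤ (Fin m)).span_eq, Submodule.span_le]
  rintro _ ⟨i, rfl⟩
  have hsum : (Pi.single i 1 : Fin m → ℤ) =
      ∑ I : Fin m ↪ Fin n, ((A.submatrix id I).det * g I) • Pi.single i 1 := by
    rw [← Finset.sum_smul, ← hg, one_smul]
  rw [Pi.basisFun_apply, hsum]
  refine Submodule.sum_mem _ fun I _ => ?_
  obtain ⟨z, hz⟩ :=
    exists_mulVec_eq_submatrix_mulVec A I ((A.submatrix id I).adjugate *ᵥ Pi.single i 1)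
  refine ⟨g I • z, ?_⟩
  rw [mulVecLin_apply, mulVec_smul, hz, mulVec_mulVec, mul_adjugate, smul_mulVec, one_mulVec,
    smul_smul, mul_comm]

end Surjective

theorem mem_span_kerLat {m k : ℕ} (A : Matrix (Fin m) (Fin (m + k)) ℤ)
    (hdet : (A.submatrix id (Fin.castAdd k)).det ≠ 0) {x : Fin (m + k) → ℝ}
    (hx : Rmat A *ᵥ x = 0) : x ∈ Submodule.span ℝ (kerLat A) := by
  set A₁ := A.submatrix id (Fin.castAdd k)
  set d : ℝ := (A₁.det : ℝ)
  have hd : d ≠ 0 := Int.cast_ne_zero.2 hdet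
  set w : Fin k → Fin (m + k) → ℤ := fun j =>
    Fin.append (-(A₁.adjugate * A.submatrix id (Fin.natAdd m)) *ᵥ Pi.single j 1)
      (A₁.det • Pi.single j 1)
  have hw : ∀ j, A *ᵥ w j = 0 := fun j => by
    rw [mulVec_append, neg_mulVec, mulVec_neg, mulVec_mulVec, ← Matrix.mul_assoc, mul_adjugate,
      smul_mul, Matrix.one_mul, smul_mulVec, mulVec_smul, neg_add_cancel]
  set y := ∑ j, (x (Fin.natAdd m j) / d) • Rvec (w j)
  have hy : y ∈ Submodule.span ℝ (kerLat A) :=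
    Submodule.sum_mem _ fun j _ => Submodule.smul_mem _ _ (Submodule.subset_span ⟨w j, hw j, rfl⟩)
  suffices x = y from this ▸ hy
  refine eq_of_mulVec_eq_zero_of_forall_natAdd_eq _ (isUnit_det_submatrix_Rmat A _ hdet) hx
    (Rmat_mulVec_eq_zero_of_mem_span_kerLat A hy) fun j => ?_
  simp [y, w, Rvec, Pi.single_apply]
  exact (div_mul_cancel₀ _ hd).symm

theorem add_mulVec_mem_interior_image_coneOf {m k : ℕ} (A : Matrix (Fin m) (Fin (m + k)) ℤ)
    (hdet : (A.submatrix id (Fin.castAdd k)).det ≠ 0) (w q : Fin m → ℝ) (hq : ∀ i, 0 < q i) :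
    w + Rmat (A.submatrix id (Fin.castAdd k)) *ᵥ q ∈ interior ((fun c => w + c) '' coneOf A) := by
  set B₁ := Rmat (A.submatrix id (Fin.castAdd k))
  have hB : IsUnit B₁ := (isUnit_iff_isUnit_det _).2 (isUnit_det_submatrix_Rmat A _ hdet)
  set P : Set (Fin m → ℝ) := Set.univ.pi fun _ => Set.Ioi 0
  have hopen : IsOpen (B₁.mulVecLin '' P) :=
    B₁.mulVecLin.isOpenMap_of_finiteDimensional (mulVec_surjective_iff_isUnit.2 hB) _
      (isOpen_set_pi Set.finite_univ fun _ _ => isOpen_Ioi)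
  refine mem_interior.2 ⟨(fun c => w + c) '' (B₁.mulVecLin '' P), Set.image_mono ?_,
    isOpenMap_add_left w _ hopen, ⟨_, ⟨q, fun i _ => hq i, rfl⟩, rfl⟩⟩
  rintro _ ⟨q', hq', rfl⟩
  refine ⟨Fin.append q' 0, Fin.addCases (fun i => by simpa using (hq' i trivial).le) (by simp), ?_⟩
  rw [mulVec_append, mulVec_zero, add_zero]
  rfl

def CoversWith {N : ℕ} (s : ℕ) (K L : Set (Fin N → ℝ)) (μ : ℝ) : Prop :=
  ∀ x ∈ Submodule.span ℝ L,
    ∃ T : Finset (Fin N → ℝ), ↑T ⊆ L ∧ s ≤ T.card ∧ ∀ y ∈ T, ∃ k ∈ K, x = y + μ • k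

theorem muCov_le_of_coversWith {N s : ℕ} {K L : Set (Fin N → ℝ)} {μ : ℝ} (hμ : 0 < μ)
    (h : CoversWith s K L μ) : muCov s K L ≤ μ :=
  csInf_le ⟨0, fun _ h => h.1.le⟩ ⟨hμ, h⟩

def FeasibleBeyond {m n : ℕ} (s : ℕ) (A : Matrix (Fin m) (Fin n) ℤ) (w : Fin m → ℝ) (t : ℝ) :
    Prop :=
  ∀ b : Fin m → ℤ, Rvec b ∈ interior ((fun c => t • w + c) '' coneOf A) → b ∈ feas s A

theorem coversWith_of_forall_exists_feas {m n s : ℕ} (A : Matrix (Fin m) (Fin n) ℤ)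
    (hA : ∀ x : Fin n → ℝ, (∀ i, 0 ≤ x i) → Rmat A *ᵥ x = 0 → x = 0) (w : Fin n → ℝ) {μ : ℝ}
    (hμ : 0 < μ) (h : ∀ x, Rmat A *ᵥ x = 0 →
      ∃ u : Fin n → ℤ, A *ᵥ u ∈ feas s A ∧ ∀ l, (u l : ℝ) - x l ≤ μ * w l) :
    CoversWith s ((fun x => x - w) '' knap A (Rmat A *ᵥ w)) (kerLat A) μ := by
  intro x hx
  have hx0 := Rmat_mulVec_eq_zero_of_mem_span_kerLat A hx
  obtain ⟨u, hu, hux⟩ := h x hx0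
  set Z := {z : Fin n → ℤ | (∀ i, 0 ≤ z i) ∧ A *ᵥ z = A *ᵥ u}
  have hZ : Z.Finite := finite_fiber A hA _
  refine ⟨hZ.toFinset.image fun z => Rvec (u - z), ?_, ?_, ?_⟩
  · intro y hy
    simp only [Finset.coe_image, Set.Finite.coe_toFinset] at hy
    obtain ⟨z, hz, rfl⟩ := hy
    exact ⟨u - z, by rw [mulVec_sub, hz.2, sub_self], rfl⟩
  · have hinj : Function.Injective fun z => Rvec (u - z) :=
      Rvec_injective.comp sub_right_injective
    rw [Finset.card_image_of_injective _ hinj,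
      ← Set.ncard_eq_toFinset_card Z hZ]
    exact hu
  · intro y hy
    simp only [Finset.mem_image, Set.Finite.mem_toFinset] at hy
    obtain ⟨z, hz, rfl⟩ := hy
    refine ⟨μ⁻¹ • (x - Rvec (u - z)),
      ⟨w + μ⁻¹ • (x - Rvec (u - z)), ⟨fun l => ?_, ?_⟩, add_sub_cancel_left _ _⟩, ?_⟩
    · have hzl : (0 : ℝ) ≤ z l := Int.cast_nonneg (hz.1 l)
      have e : w l + μ⁻¹ * (x l - (u l - z l)) = μ⁻¹ * (μ * w l + x l - u l + z l) := by
        field_simp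
        ring
      simp only [Pi.add_apply, Pi.smul_apply, Pi.sub_apply, smul_eq_mul, Rvec, Int.cast_sub, e]
      exact mul_nonneg (inv_nonneg.2 hμ.le) (by linarith [hux l])
    · rw [mulVec_add, mulVec_smul, mulVec_sub, hx0, Rmat_mulVec_Rvec, mulVec_sub, hz.2, sub_self,
        Rvec_zero, sub_zero, smul_zero, add_zero]
    · rw [smul_inv_smul₀ hμ.ne']
      abel

theorem exists_mulVec_mem_interior_sub_le {m k : ℕ} (A : Matrix (Fin m) (Fin (m + k)) ℤ)
    (hdet : (A.submatrix id (Fin.castAdd k)).det ≠ 0) {β c t : ℝ} (hβ : 1 ≤ β)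
    (hE : ∀ i j, |blockInvMul (Rmat A) i j| ≤ β)
    (hc : ∀ i, ∑ j, max (blockInvMul (Rmat A) i j) 0 ≤ c) (ht : 0 ≤ t)
    {x : Fin (m + k) → ℝ} (hx : Rmat A *ᵥ x = 0) :
    ∃ u : Fin (m + k) → ℤ, Rvec (A *ᵥ u) ∈ interior ((fun y => t • vA A + y) '' coneOf A) ∧
      ∀ l, (u l : ℝ) - x l ≤ ((k + 1) * β * t + 2 + c) * Fin.append (1 : Fin m → ℝ) 0 l := by
  set B := Rmat A
  set B₁ := B.submatrix id (Fin.castAdd k)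
  set E := blockInvMul B
  have hB : IsUnit B₁.det := isUnit_det_submatrix_Rmat A _ hdet
  set x₂ : Fin k → ℝ := fun j => x (Fin.natAdd m j)
  set u₂ : Fin k → ℤ := fun j => ⌊x₂ j⌋
  set σ := B₁⁻¹ *ᵥ (t • vA A - B.submatrix id (Fin.natAdd m) *ᵥ Rvec u₂)
  set u₁ : Fin m → ℤ := fun i => ⌊σ i⌋ + 1
  refine ⟨Fin.append u₁ u₂, ?_, Fin.addCases (fun i => ?_) (fun j => ?_)⟩
  · have hb : Rvec (A *ᵥ Fin.append u₁ u₂) = t • vA A + B₁ *ᵥ (Rvec u₁ - σ) := by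
      rw [← Rmat_mulVec_Rvec, Rvec_append, mulVec_append, mulVec_sub, mulVec_mulVec,
        mul_nonsing_inv _ hB, one_mulVec]
      abel
    rw [hb]
    refine add_mulVec_mem_interior_image_coneOf A hdet _ _ fun i => ?_
    simp [u₁, Rvec]
  · have hσx : σ - (fun i => x (Fin.castAdd k i)) = t • 1 + t • (E *ᵥ 1) + E *ᵥ (x₂ - Rvec u₂) := by
      have hσ : σ = t • 1 + E *ᵥ (t • 1 - Rvec u₂) := inv_mulVec_smul_mulVec_one_sub B hB t _
      rw [hσ, left_eq_neg_blockInvMul_mulVec B hB hx,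
        mulVec_sub, mulVec_sub, mulVec_smul]
      abel
    have hE1 : (E *ᵥ 1) i ≤ k * β := by
      calc (E *ᵥ 1) i = ∑ j, E i j := by simp [mulVec, dotProduct]
        _ ≤ ∑ _ : Fin k, β := Finset.sum_le_sum fun j _ => (le_abs_self _).trans (hE i j)
        _ = k * β := by simp
    have hEfrac : (E *ᵥ (x₂ - Rvec u₂)) i ≤ c :=
      (mulVec_apply_le_sum_max E (fun j => sub_nonneg.2 (Int.floor_le (x₂ j)))
        (fun j => by linarith [Int.lt_floor_add_one (x₂ j), show Rvec u₂ j = ⌊x₂ j⌋ from rfl])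
        i).trans (hc i)
    have hσxi := congrFun hσx i
    simp only [Pi.sub_apply, Pi.add_apply, Pi.smul_apply, Pi.one_apply, smul_eq_mul,
      mul_one] at hσxi
    have hu₁ : (u₁ i : ℝ) ≤ σ i + 1 := by
      simpa [u₁] using Int.floor_le (σ i)
    simp only [Fin.append_left, Pi.one_apply, mul_one]
    nlinarith [mul_le_mul_of_nonneg_left hβ ht, mul_le_mul_of_nonneg_left hE1 ht]
  · simpa [u₂, x₂] using Int.floor_le (x (Fin.natAdd m j))

theorem muCov_le_of_feasibleBeyond {m k s : ℕ} (A : Matrix (Fin m) (Fin (m + k)) ℤ)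
    (hA : ∀ x : Fin (m + k) → ℝ, (∀ i, 0 ≤ x i) → Rmat A *ᵥ x = 0 → x = 0)
    (hdet : (A.submatrix id (Fin.castAdd k)).det ≠ 0) {β c t : ℝ} (hβ : 1 ≤ β)
    (hE : ∀ i j, |blockInvMul (Rmat A) i j| ≤ β)
    (hc : ∀ i, ∑ j, max (blockInvMul (Rmat A) i j) 0 ≤ c) (hc0 : 0 ≤ c) (ht : 0 ≤ t)
    (hfeas : FeasibleBeyond s A (vA A) t) :
    muCov s ((fun x => x - Fin.append 1 0) '' knap A (Rmat A *ᵥ Fin.append 1 0)) (kerLat A) ≤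
      (k + 1) * β * t + 2 + c := by
  have hμ : 0 < (k + 1) * β * t + 2 + c := by
    have : 0 ≤ (k + 1) * β * t := by positivity
    linarith
  refine muCov_le_of_coversWith hμ (coversWith_of_forall_exists_feas A hA _ hμ fun x hx => ?_)
  obtain ⟨u, hu, hux⟩ := exists_mulVec_mem_interior_sub_le A hdet hβ hE hc ht hx
  exact ⟨u, hfeas _ hu, hux⟩

theorem feasibleBeyond_of_coversWith {m k s : ℕ} (A : Matrix (Fin m) (Fin (m + k)) ℤ)
    (hA : regular A) (hdet : (A.submatrix id (Fin.castAdd k)).det ≠ 0)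
    {K : Set (Fin (m + k) → ℝ)} {R μ : ℝ} (hK : ∀ y ∈ K, ∀ l, y l ≤ R) (hμ : 0 ≤ μ)
    (hcov : CoversWith s K (kerLat A) μ) : FeasibleBeyond s A (vA A) (μ * R) := by
  intro b hb
  obtain ⟨_, ⟨r, hr0, rfl⟩, hbr⟩ := interior_subset hb
  obtain ⟨z₀, hz₀⟩ := exists_mulVec_eq_of_gcd_eq_one A hA.1 b
  set x : Fin (m + k) → ℝ := (μ * R) • (fun _ => 1) + r - Rvec z₀
  have hx : Rmat A *ᵥ x = 0 := by
    rw [mulVec_sub, mulVec_add, mulVec_smul, Rmat_mulVec_Rvec, hz₀, ← hbr]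
    exact sub_self _
  obtain ⟨T, hTL, hTs, hTK⟩ := hcov x (mem_span_kerLat A hdet hx)
  set Z := {z : Fin (m + k) → ℤ | (∀ i, 0 ≤ z i) ∧ A *ᵥ z = b}
  have hZ : Z.Finite := finite_fiber A hA.2 b
  have hTZ : (T : Set (Fin (m + k) → ℝ)) ⊆ (fun z => Rvec (z - z₀)) '' Z := by
    intro y hy
    obtain ⟨z, hz, rfl⟩ := hTL hy
    obtain ⟨y', hy', hxy⟩ := hTK _ hy
    refine ⟨z₀ + z, ⟨fun l => ?_, by rw [mulVec_add, hz₀, hz, add_zero]⟩, by simp⟩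
    have hxl := congrFun hxy l
    simp only [x, Rvec, Pi.add_apply, Pi.sub_apply, Pi.smul_apply, smul_eq_mul, mul_one] at hxl
    have : (0 : ℝ) ≤ z₀ l + z l := by
      nlinarith [mul_nonneg hμ (sub_nonneg.2 (hK y' hy' l)), hr0 l]
    exact_mod_cast this
  calc s ≤ T.card := hTs
    _ = (T : Set (Fin (m + k) → ℝ)).ncard := (Set.ncard_coe_finset T).symm
    _ ≤ ((fun z => Rvec (z - z₀)) '' Z).ncard := Set.ncard_le_ncard hTZ (hZ.image _)
    _ ≤ Z.ncard := Set.ncard_image_le hZ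

theorem exists_feasibleBeyond_of_coversWith {m k s : ℕ} (A : Matrix (Fin m) (Fin (m + k)) ℤ)
    (hA : regular A) (hdet : (A.submatrix id (Fin.castAdd k)).det ≠ 0) {w : Fin (m + k) → ℝ}
    (hw : ∀ l, 0 ≤ w l) (b : Fin m → ℝ) {μ : ℝ} (hμ : 0 ≤ μ)
    (hcov : CoversWith s ((fun x => x - w) '' knap A b) (kerLat A) μ) :
    ∃ t, 0 ≤ t ∧ FeasibleBeyond s A (vA A) t := by
  obtain ⟨R, hR0, hR⟩ := exists_forall_mem_knap_le A hA.2 b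
  refine ⟨μ * R, mul_nonneg hμ hR0, feasibleBeyond_of_coversWith A hA hdet ?_ hμ hcov⟩
  rintro _ ⟨p, hp, rfl⟩ l
  exact (sub_le_self _ (hw l)).trans (hR p hp l)

theorem gFrob_nonneg {m n : ℕ} (s : ℕ) (A : Matrix (Fin m) (Fin n) ℤ) : 0 ≤ gFrob s A :=
  Real.sInf_nonneg fun _ ht => ht.1

theorem muCov_sub_div_le_gFrob {m n s : ℕ} {A : Matrix (Fin m) (Fin n) ℤ}
    {K L : Set (Fin n → ℝ)} {a d : ℝ} (ha : 0 < a) (hd : 0 ≤ d)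
    (hfin : ∀ μ, 0 < μ → CoversWith s K L μ → ∃ t, 0 ≤ t ∧ FeasibleBeyond s A (vA A) t)
    (hle : ∀ t, 0 ≤ t → FeasibleBeyond s A (vA A) t → muCov s K L ≤ a * t + d) :
    (muCov s K L - d) / a ≤ gFrob s A := by
  rcases {μ | 0 < μ ∧ CoversWith s K L μ}.eq_empty_or_nonempty with hempty | ⟨μ, hμ, hcov⟩
  · have hμ0 : muCov s K L = 0 := by
      change sInf {μ | 0 < μ ∧ CoversWith s K L μ} = 0
      rw [hempty, Real.sInf_empty]
    rw [hμ0]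
    exact (div_nonpos_of_nonpos_of_nonneg (by linarith) ha.le).trans (gFrob_nonneg s A)
  obtain ⟨t₀, ht₀, hfeas₀⟩ := hfin μ hμ hcov
  refine le_csInf ⟨t₀, ht₀, hfeas₀⟩ fun t ⟨ht, hfeas⟩ => ?_
  rw [div_le_iff₀ ha]
  linarith [hle t ht hfeas]

theorem ite_lt_eq_append_one_zero {m k : ℕ} :
    (fun j : Fin (m + k) => if (j : ℕ) < m then (1 : ℝ) else 0) = Fin.append 1 0 := by
  ext l
  refine Fin.addCases (fun i => ?_) (fun j => ?_) l <;> simp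

theorem Rvec_sum_submatrix_castAdd {m k : ℕ} (A : Matrix (Fin m) (Fin (m + k)) ℤ) :
    Rvec (fun i => ∑ j, A.submatrix id (Fin.castAdd k) i j) = Rmat A *ᵥ Fin.append 1 0 := by
  rw [mulVec_append, mulVec_zero, add_zero]
  ext i
  simp [Rvec, Rmat, mulVec, dotProduct]

theorem stmt_8_general {m k : ℕ} (s : ℕ)
    (A : Matrix (Fin m) (Fin (m + k)) ℤ) (hA : regular A)
    (A1 : Matrix (Fin m) (Fin m) ℤ) (hA1 : A1 = Matrix.of fun i j => A i (Fin.castAdd k j))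
    (A2 : Matrix (Fin m) (Fin k) ℤ) (hA2 : A2 = Matrix.of fun i j => A i (Fin.natAdd m j))
    (hdet : A1.det ≠ 0)
    (c : ℝ) (hc : c = sSup {x : ℝ | ∃ i : Fin m,
      x = ∑ j : Fin k,
        max (((A1.map (Int.cast : ℤ → ℝ))⁻¹ * A2.map (Int.cast : ℤ → ℝ)) i j) 0})
    (vbar : Fin m → ℤ) (hvbar : vbar = fun i => ∑ j : Fin m, A1 i j)
    (onehat : Fin (m + k) → ℝ) (honehat : onehat = fun j : Fin (m + k) => if (j : ℕ) < m then (1 : ℝ) else 0) :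
    gFrob s A ≥ (1 / ((k : ℝ) + 1)) * ((mMin A : ℝ) / (mMax A : ℝ)) *
      (muCov s ((fun x => x - onehat) '' knap A (Rvec vbar)) (kerLat A) - 2 - c) := by
  obtain rfl : A1 = A.submatrix id (Fin.castAdd k) := hA1
  obtain rfl : A2 = A.submatrix id (Fin.natAdd m) := hA2
  subst hvbar honehat
  rw [Rvec_sum_submatrix_castAdd, ite_lt_eq_append_one_zero]
  rcases (mMin_nonneg A (Fin.castAddEmb k)).eq_or_lt with hmin | hmin
  · simpa [← hmin] using gFrob_nonneg s A
  have hβ := one_le_mMax_div_mMin A (Fin.castAddEmb k) hmin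
  have hc0 : 0 ≤ c := hc ▸ maxPosRowSum_nonneg _
  have key := muCov_sub_div_le_gFrob (s := s) (a := (k + 1) * (mMax A / mMin A)) (d := 2 + c)
    (mul_pos (by positivity) (by linarith)) (by linarith)
    (fun μ hμ hcov => exists_feasibleBeyond_of_coversWith A hA hdet
      (Fin.addCases (by simp) (by simp)) _ hμ.le hcov)
    (fun t ht hfeas => (muCov_le_of_feasibleBeyond A hA.2 hdet hβ (abs_blockInvMul_le A hdet hmin)
      (fun i => hc ▸ sum_max_le_maxPosRowSum _ i) hc0 ht hfeas).trans_eq (by ring))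
  have hm : (mMin A : ℝ) ≠ 0 := Int.cast_ne_zero.2 hmin.ne'
  have hM : (mMax A : ℝ) ≠ 0 := fun h => by
    rw [h, zero_div] at hβ
    linarith
  rw [ge_iff_le, sub_sub]
  convert key using 1
  field_simp

/-- Lower bound on g_s(A) via the s-covering radius (Lemma 3).
Here n = m + k, A = (A₁, A₂) with A₁ the first m columns. -/
theorem stmt_8 {m k : ℕ} (hm : 1 ≤ m) (hk : 1 ≤ k) (s : ℕ) (hs : 1 ≤ s)
    (A : Matrix (Fin m) (Fin (m + k)) ℤ) (hA : regular A)
    (A1 : Matrix (Fin m) (Fin m) ℤ) (hA1 : A1 = Matrix.of fun i j => A i (Fin.castAdd k j))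
    (A2 : Matrix (Fin m) (Fin k) ℤ) (hA2 : A2 = Matrix.of fun i j => A i (Fin.natAdd m j))
    (hdet : A1.det ≠ 0)
    (c : ℝ) (hc : c = sSup {x : ℝ | ∃ i : Fin m,
      x = ∑ j : Fin k,
        max (((A1.map (Int.cast : ℤ → ℝ))⁻¹ * A2.map (Int.cast : ℤ → ℝ)) i j) 0})
    (vbar : Fin m → ℤ) (hvbar : vbar = fun i => ∑ j : Fin m, A1 i j)
    (onehat : Fin (m + k) → ℝ) (honehat : onehat = fun j : Fin (m + k) => if (j : ℕ) < m then (1 : ℝ) else 0) :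
    gFrob s A ≥ (1 / ((k : ℝ) + 1)) * ((mMin A : ℝ) / (mMax A : ℝ)) *
      (muCov s ((fun x => x - onehat) '' knap A (Rvec vbar)) (kerLat A) - 2 - c) :=
  stmt_8_general s A hA A1 hA1 A2 hA2 hdet c hc vbar hvbar onehat honehat

end
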